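/- Let l₁, l₂, l₃ ≥ 2 and let G be the theta graph consisting of two vertices P and Q joined by three internally disjoint paths of lengths l₁, l₂, l₃ (so the i-th path has lᵢ − 1 internal vertices of degree 2). Set aᵢ = u^{lᵢ} for a complex number u. Then det(I − u·B) = (1 − (a₁a₂ + a₂a₃ + a₃a₁) − 2a₁a₂a₃)·(1 − (a₁a₂ + a₂a₃ + a₃a₁) + 2a₁a₂a₃), where B is the non-backtracking edge-adjacency matrix of G. -/

import Mathlib

/-!
Every dart of the theta graph lies on exactly one of six chains, path `i` traversed from `P` to `Q`
or back, and `B = S + J`, where `S` steps forward inside a chain and `J` turns from the last dart of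
a chain onto the first dart of a chain along another path. The matrix `1 - u S` is unitriangular,
and the column of `(1 - u S)⁻¹` at the first dart of a chain is `u ^ k` at its `k`-th dart. As `J`
factors through the six chain ends, the Weinstein–Aronszajn identity `det (1 - X Y) = det (1 - Y X)`
reduces `det (1 - u B)` to the `6 × 6` determinant `det (1 - T · diag (u ^ lᵢ))`, where `T` records
the allowed turns. In block form this is `det (1 - A²) = det (1 - A) · det (1 + A)` for the `3 × 3`
matrix `A` with zero diagonal and entries `u ^ l j` off the diagonal of column `j`.
-/

open Matrix

/-- Vertices of the theta graph: the two endpoints `P = inl false`, `Q = inl true`,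
together with the internal vertices of the three paths (`lᵢ − 1` internal vertices on
the `i`-th path). -/
abbrev ThetaV (l : Fin 3 → ℕ) := Bool ⊕ (Σ i : Fin 3, Fin (l i - 1))

/-- One-way adjacency relation of the theta graph: `P` is joined to the `0`-th internal
vertex of each path, consecutive internal vertices of a path are joined, and the last
internal vertex of each path is joined to `Q`. -/
def thetaR (l : Fin 3 → ℕ) : ThetaV l → ThetaV l → Bool
  | Sum.inl false, Sum.inr ⟨_, k⟩ => k.val == 0
  | Sum.inr ⟨i, k⟩, Sum.inr ⟨j, m⟩ => i == j && (m.val == k.val + 1)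
  | Sum.inr ⟨i, k⟩, Sum.inl true => k.val == l i - 2
  | _, _ => false

/-- The theta graph: two vertices joined by three internally disjoint paths of lengths
`l 0`, `l 1`, `l 2`. -/
def thetaGraph (l : Fin 3 → ℕ) : SimpleGraph (ThetaV l) where
  Adj a b := thetaR l a b ∨ thetaR l b a
  symm := ⟨fun a b h => h.symm⟩
  loopless := by
    constructor
    rintro ((_ | _) | ⟨i, k⟩) h <;>
      · simp [thetaR] at h

instance (l : Fin 3 → ℕ) : DecidableRel (thetaGraph l).Adj := fun a b =>
  inferInstanceAs (Decidable (_ ∨ _))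

/-- A dart `d'` follows a dart `d` without backtracking. -/
def FollowsNB {V : Type*} {G : SimpleGraph V} (d' d : G.Dart) : Prop :=
  d'.fst = d.snd ∧ d' ≠ d.symm

instance {V : Type*} {G : SimpleGraph V} [DecidableEq V] (d' d : G.Dart) :
    Decidable (FollowsNB d' d) :=
  inferInstanceAs (Decidable (_ ∧ _))

/-- The non-backtracking edge-adjacency matrix of a finite simple graph. -/
def nbMatrix {V : Type*} (G : SimpleGraph V) [Fintype V] [DecidableEq V]
    [DecidableRel G.Adj] : Matrix G.Dart G.Dart ℂ :=
  fun d' d => if FollowsNB d' d then 1 else 0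

namespace Matrix

theorem det_one_sub_eq_one_of_strictLowerTriangular {ι R α : Type*} [Fintype ι] [DecidableEq ι]
    [CommRing R] [LinearOrder α] (b : ι → α) (N : Matrix ι ι R)
    (hN : ∀ i j, b i ≤ b j → N i j = 0) : (1 - N).det = 1 := by
  have htri : (1 - N).BlockTriangular (OrderDual.toDual ∘ b) := fun i j hij => by
    have hne : i ≠ j := by rintro rfl; exact lt_irrefl _ hij
    simp [one_apply_ne hne, hN i j hij.le]
  rw [htri.det]
  refine Finset.prod_eq_one fun a _ => ?_
  have hblock : (1 - N).toSquareBlock (OrderDual.toDual ∘ b) a = 1 := by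
    ext ⟨i, hi⟩ ⟨j, hj⟩
    have hij : b i = b j := by simpa [← hj] using hi
    simp [toSquareBlock_def, one_apply, hN i j hij.le]
  rw [hblock, det_one]

variable {C R : Type*} [DecidableEq C] [CommRing R] (n : C → ℕ)

variable (R) in
def chainShift : Matrix (Σ c, Fin (n c)) (Σ c, Fin (n c)) R :=
  of fun x y => if x.1 = y.1 ∧ (x.2 : ℕ) = y.2 + 1 then 1 else 0

def chainJunction (T : Matrix C C R) : Matrix (Σ c, Fin (n c)) (Σ c, Fin (n c)) R :=
  of fun x y => if (x.2 : ℕ) = 0 ∧ (y.2 : ℕ) + 1 = n y.1 then T x.1 y.1 else 0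

variable (R) in
def chainStart : Matrix (Σ c, Fin (n c)) C R :=
  of fun x c => if x.1 = c ∧ (x.2 : ℕ) = 0 then 1 else 0

variable (R) in
def chainEnd : Matrix C (Σ c, Fin (n c)) R :=
  of fun c y => if y.1 = c ∧ (y.2 : ℕ) + 1 = n c then 1 else 0

def chainGeom (u : R) : Matrix (Σ c, Fin (n c)) C R :=
  of fun x c => if x.1 = c then u ^ (x.2 : ℕ) else 0

variable [Fintype C]

theorem chainJunction_eq_mul (T : Matrix C C R) :
    chainJunction n T = chainStart R n * T * chainEnd R n := by
  ext x y
  simp only [chainJunction, chainStart, chainEnd, mul_apply, of_apply, ite_and, ite_mul, one_mul,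
    zero_mul, mul_ite, mul_one, mul_zero, Finset.sum_ite_eq, Finset.mem_univ, if_true]
  simp only [← ite_and, and_comm]

theorem det_one_sub_smul_chainShift (u : R) : (1 - u • chainShift R n).det = 1 :=
  det_one_sub_eq_one_of_strictLowerTriangular (fun x : Σ c, Fin (n c) => (x.2 : ℕ)) _
    fun x y hxy => by
      simp only [smul_apply, chainShift, of_apply, smul_eq_mul]
      rw [if_neg (by omega), mul_zero]

theorem chainShift_mul_apply {κ : Type*} (M : Matrix (Σ c, Fin (n c)) κ R) (x k) :
    (chainShift R n * M) x k =
      if h : (x.2 : ℕ) = 0 then 0 else M ⟨x.1, ⟨x.2 - 1, by omega⟩⟩ k := by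
  obtain ⟨c, i⟩ := x
  dsimp only
  rw [mul_apply]
  split_ifs with hi
  · refine Finset.sum_eq_zero fun z _ => ?_
    simp [chainShift, hi]
  · rw [Finset.sum_eq_single ⟨c, ⟨i - 1, by omega⟩⟩]
    · simp only [chainShift, of_apply, true_and, ite_mul, one_mul, zero_mul, ite_eq_left_iff]
      omega
    · rintro ⟨c', j⟩ - hne
      simp only [chainShift, of_apply, ite_mul, one_mul, zero_mul]
      rw [if_neg]
      rintro ⟨rfl, hj⟩
      exact hne (Sigma.ext rfl (heq_of_eq (Fin.ext (by simp; omega))))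
    · simp

theorem one_sub_smul_chainShift_mul_chainGeom (u : R) :
    (1 - u • chainShift R n) * chainGeom n u = chainStart R n := by
  ext ⟨c', k⟩ c
  rw [Matrix.sub_mul, Matrix.one_mul, sub_apply, Matrix.smul_mul, smul_apply,
    chainShift_mul_apply]
  by_cases hk : (k : ℕ) = 0
  · simp [chainGeom, chainStart, hk]
  · simp only [chainGeom, chainStart, of_apply, dif_neg hk, hk, and_false, if_false]
    split_ifs
    · rw [smul_eq_mul, ← pow_succ', Nat.sub_add_cancel (by omega), sub_self]
    · simp

theorem chainEnd_mul_chainGeom (hn : ∀ c, 0 < n c) (u : R) :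
    chainEnd R n * chainGeom n u = diagonal fun c => u ^ (n c - 1) := by
  ext c c'
  rw [mul_apply, Finset.sum_eq_single ⟨c, ⟨n c - 1, by have := hn c; omega⟩⟩]
  · simp [chainEnd, chainGeom, diagonal_apply, Nat.sub_add_cancel (hn c)]
  · rintro ⟨c'', j⟩ - hne
    simp only [chainEnd, of_apply, ite_mul, one_mul, zero_mul]
    rw [if_neg]
    rintro ⟨rfl, hj⟩
    exact hne (Sigma.ext rfl (heq_of_eq (Fin.ext (by simp; omega))))
  · simp

theorem det_one_sub_smul_chainShift_add_chainJunction (hn : ∀ c, 0 < n c) (T : Matrix C C R)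
    (u : R) : (1 - u • (chainShift R n + chainJunction n T)).det =
      (1 - T * diagonal fun c => u ^ n c).det := by
  have hfactor : 1 - u • (chainShift R n + chainJunction n T) =
      (1 - u • chainShift R n) * (1 - (u • chainGeom n u) * (T * chainEnd R n)) := by
    rw [Matrix.mul_sub, Matrix.mul_one, ← Matrix.mul_assoc, Matrix.mul_smul,
      one_sub_smul_chainShift_mul_chainGeom, chainJunction_eq_mul, smul_add, Matrix.mul_assoc,
      Matrix.smul_mul]
    abel
  rw [hfactor, det_mul, det_one_sub_smul_chainShift, one_mul, det_one_sub_mul_comm,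
    Matrix.mul_smul, Matrix.mul_assoc, chainEnd_mul_chainGeom n hn]
  congr 2
  ext c c'
  rw [smul_apply, mul_diagonal, mul_diagonal, smul_eq_mul, mul_left_comm, ← pow_succ',
    Nat.sub_add_cancel (hn c')]

end Matrix

namespace thetaGraph

open Matrix

variable {l : Fin 3 → ℕ}

variable (l) in
def pathVertex (i : Fin 3) (a : ℕ) : ThetaV l :=
  if _ : a = 0 then Sum.inl false
  else if h : a < l i then Sum.inr ⟨i, ⟨a - 1, by omega⟩⟩ else Sum.inl true

theorem pathVertex_succ_val {i : Fin 3} (k : Fin (l i - 1)) :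
    pathVertex l i (k + 1) = Sum.inr ⟨i, k⟩ := by
  have := k.isLt
  simp [pathVertex, show (k : ℕ) + 1 < l i by omega]

theorem pathVertex_self {i : Fin 3} (h : l i ≠ 0) : pathVertex l i (l i) = Sum.inl true := by
  simp [pathVertex, h]

theorem pathVertex_eq_pathVertex_iff {i j : Fin 3} {a b : ℕ} (hi : 0 < l i) (hj : 0 < l j)
    (ha : a ≤ l i) (hb : b ≤ l j) :
    pathVertex l i a = pathVertex l j b ↔
      (a = 0 ∧ b = 0) ∨ (a = l i ∧ b = l j) ∨ (i = j ∧ a = b) := by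
  unfold pathVertex
  split_ifs <;> grind

theorem thetaR_pathVertex_succ {i : Fin 3} {a : ℕ} (hi : 2 ≤ l i) (ha : a < l i) :
    thetaR l (pathVertex l i a) (pathVertex l i (a + 1)) = true := by
  unfold pathVertex
  split_ifs <;>
    simp only [thetaR, BEq.rfl, Bool.false_eq_true, Bool.true_and, add_tsub_cancel_right,
      beq_iff_eq] <;>
    omega

theorem exists_pathVertex_of_thetaR {v w : ThetaV l} (h : thetaR l v w = true) :
    ∃ i a, a < l i ∧ pathVertex l i a = v ∧ pathVertex l i (a + 1) = w := by
  rcases v with (_ | _) | ⟨i, k⟩ <;> rcases w with (_ | _) | ⟨j, m⟩ <;>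
    simp only [thetaR, reduceCtorEq, Bool.and_eq_true, beq_iff_eq] at h
  · exact ⟨j, 0, by omega, rfl, by simpa [h] using pathVertex_succ_val m⟩
  · refine ⟨i, k + 1, by omega, pathVertex_succ_val k, ?_⟩
    rw [show (k : ℕ) + 1 + 1 = l i by omega]
    exact pathVertex_self (by omega)
  · obtain ⟨rfl, hm⟩ := h
    exact ⟨i, k + 1, by omega, pathVertex_succ_val k, by rw [← hm]; exact pathVertex_succ_val m⟩

variable (l) in
/-- The chain `(true, i)` runs along path `i` from `P` to `Q`, the chain `(false, i)` back. -/
def chainVertex (c : Bool × Fin 3) (a : ℕ) : ThetaV l :=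
  pathVertex l c.2 (if c.1 then a else l c.2 - a)

theorem adj_chainVertex_succ (hl : ∀ i, 2 ≤ l i) (c : Bool × Fin 3) {a : ℕ} (ha : a < l c.2) :
    (thetaGraph l).Adj (chainVertex l c a) (chainVertex l c (a + 1)) := by
  obtain ⟨_ | _, i⟩ := c <;> dsimp only at ha
  · right
    have := thetaR_pathVertex_succ (hl i) (show l i - (a + 1) < l i by omega)
    rwa [show l i - (a + 1) + 1 = l i - a by omega] at this
  · exact Or.inl (thetaR_pathVertex_succ (hl i) ha)

def chainDart (hl : ∀ i, 2 ≤ l i) (x : Σ c : Bool × Fin 3, Fin (l c.2)) : (thetaGraph l).Dart :=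
  ⟨(chainVertex l x.1 x.2, chainVertex l x.1 (x.2 + 1)), adj_chainVertex_succ hl x.1 x.2.isLt⟩

theorem chainDart_injective (hl : ∀ i, 2 ≤ l i) : Function.Injective (chainDart hl) := by
  rintro ⟨⟨b, i⟩, k⟩ ⟨⟨b', j⟩, m⟩ h
  obtain ⟨hfst, hsnd⟩ := Prod.ext_iff.mp (congrArg SimpleGraph.Dart.toProd h)
  suffices b = b' ∧ i = j ∧ (k : ℕ) = m by
    obtain ⟨rfl, rfl, hkm⟩ := this
    rw [Fin.ext hkm]
  have := hl i; have := hl j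
  simp only [chainDart, chainVertex] at hfst hsnd
  rw [pathVertex_eq_pathVertex_iff (by omega) (by omega) (by split <;> omega)
    (by split <;> omega)] at hfst hsnd
  grind

theorem chainDart_surjective (hl : ∀ i, 2 ≤ l i) : Function.Surjective (chainDart hl) := by
  rintro ⟨⟨v, w⟩, h | h⟩
  · obtain ⟨i, a, ha, rfl, rfl⟩ := exists_pathVertex_of_thetaR h
    exact ⟨⟨(true, i), ⟨a, ha⟩⟩, rfl⟩
  · obtain ⟨i, a, ha, rfl, rfl⟩ := exists_pathVertex_of_thetaR h
    refine ⟨⟨(false, i), ⟨l i - 1 - a, by dsimp only; omega⟩⟩, SimpleGraph.Dart.ext _ _ ?_⟩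
    simp only [chainDart, chainVertex, Bool.false_eq_true, if_false]
    rw [show l i - (l i - 1 - a) = a + 1 by omega, show l i - (l i - 1 - a + 1) = a by omega]

noncomputable def chainDartEquiv (hl : ∀ i, 2 ≤ l i) :
    (Σ c : Bool × Fin 3, Fin (l c.2)) ≃ (thetaGraph l).Dart :=
  Equiv.ofBijective _ ⟨chainDart_injective hl, chainDart_surjective hl⟩

theorem followsNB_chainDart_iff (hl : ∀ i, 2 ≤ l i) (x y : Σ c : Bool × Fin 3, Fin (l c.2)) :
    FollowsNB (chainDart hl x) (chainDart hl y) ↔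
      (x.1 = y.1 ∧ (x.2 : ℕ) = y.2 + 1) ∨
        ((x.2 : ℕ) = 0 ∧ (y.2 : ℕ) + 1 = l y.1.2 ∧ x.1.1 ≠ y.1.1 ∧ x.1.2 ≠ y.1.2) := by
  obtain ⟨⟨b, i⟩, k⟩ := x
  obtain ⟨⟨b', j⟩, m⟩ := y
  have := hl i; have := hl j
  simp only [FollowsNB, ne_eq, SimpleGraph.Dart.ext_iff, SimpleGraph.Dart.symm_toProd,
    Prod.ext_iff, Prod.fst_swap, Prod.snd_swap, chainDart, chainVertex]
  rw [pathVertex_eq_pathVertex_iff (by omega) (by omega) (by split <;> omega) (by split <;> omega),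
    pathVertex_eq_pathVertex_iff (by omega) (by omega) (by split <;> omega) (by split <;> omega)]
  grind

/-- Chains ending at `P` are `(false, j)` and chains starting there are `(true, i)`, dually at `Q`;
turning from `(_, j)` onto `(_, i)` backtracks iff `i = j`. -/
def turnMatrix (R : Type*) [CommRing R] : Matrix (Bool × Fin 3) (Bool × Fin 3) R :=
  of fun c c' => if c.1 ≠ c'.1 ∧ c.2 ≠ c'.2 then 1 else 0

theorem det_one_sub_turnMatrix_mul_diagonal {R : Type*} [CommRing R] (w : Fin 3 → R) :
    (1 - turnMatrix R * diagonal fun c : Bool × Fin 3 => w c.2).det =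
      (1 - (w 0 * w 1 + w 1 * w 2 + w 2 * w 0) - 2 * (w 0 * w 1 * w 2)) *
        (1 - (w 0 * w 1 + w 1 * w 2 + w 2 * w 0) + 2 * (w 0 * w 1 * w 2)) := by
  set A : Matrix (Fin 3) (Fin 3) R := of fun i j => if i = j then 0 else w j
  have hblocks : (1 - turnMatrix R * diagonal fun c : Bool × Fin 3 => w c.2).submatrix
      (Equiv.boolProdEquivSum (Fin 3)).symm (Equiv.boolProdEquivSum (Fin 3)).symm =
      fromBlocks 1 (-A) (-A) 1 := by
    ext (i | i) (j | j) <;> simp [turnMatrix, A, one_apply, mul_diagonal]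
  have hsq : (1 : Matrix (Fin 3) (Fin 3) R) - A * A = (1 - A) * (1 + A) := by noncomm_ring
  rw [← det_submatrix_equiv_self (Equiv.boolProdEquivSum (Fin 3)).symm, hblocks,
    det_fromBlocks_one₁₁, neg_mul_neg, hsq, det_mul, det_fin_three, det_fin_three]
  simp only [A, Matrix.sub_apply, Matrix.add_apply, one_apply, of_apply, Fin.reduceEq, ↓reduceIte]
  ring

theorem nbMatrix_submatrix_chainDartEquiv (hl : ∀ i, 2 ≤ l i) :
    (nbMatrix (thetaGraph l)).submatrix (chainDartEquiv hl) (chainDartEquiv hl) =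
      chainShift ℂ (fun c : Bool × Fin 3 => l c.2) + chainJunction _ (turnMatrix ℂ) := by
  ext x y
  change nbMatrix _ (chainDart hl x) (chainDart hl y) = _
  simp only [nbMatrix, Matrix.add_apply, chainShift, chainJunction, turnMatrix, of_apply,
    followsNB_chainDart_iff]
  split_ifs <;> grind

end thetaGraph

/-- The inverse Ihara–Selberg L-function of the theta graph with path lengths
`l₁, l₂, l₃ ≥ 2`: with `aᵢ = u^{lᵢ}`,
`det(I − u·B) = (1 − (a₁a₂ + a₂a₃ + a₃a₁) − 2a₁a₂a₃)·(1 − (a₁a₂ + a₂a₃ + a₃a₁) + 2a₁a₂a₃)`. -/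
theorem theta_graph_L_function (l : Fin 3 → ℕ) (hl : ∀ i, 2 ≤ l i) (u : ℂ) :
    Matrix.det (1 - u • nbMatrix (thetaGraph l)) =
      (1 - (u ^ l 0 * u ^ l 1 + u ^ l 1 * u ^ l 2 + u ^ l 2 * u ^ l 0)
          - 2 * (u ^ l 0 * u ^ l 1 * u ^ l 2)) *
      (1 - (u ^ l 0 * u ^ l 1 + u ^ l 1 * u ^ l 2 + u ^ l 2 * u ^ l 0)
          + 2 * (u ^ l 0 * u ^ l 1 * u ^ l 2)) := by
  set e := thetaGraph.chainDartEquiv hl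
  have hreindex : (1 - u • nbMatrix (thetaGraph l)).submatrix e e =
      1 - u • (chainShift ℂ _ + chainJunction _ (thetaGraph.turnMatrix ℂ)) := by
    rw [← thetaGraph.nbMatrix_submatrix_chainDartEquiv hl, ← submatrix_one_equiv e]
    rfl
  rw [← det_submatrix_equiv_self e, hreindex,
    det_one_sub_smul_chainShift_add_chainJunction _ fun c => by have := hl c.2; omega]
  exact thetaGraph.det_one_sub_turnMatrix_mul_diagonal fun i => u ^ l i
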